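/- If an odd prime p splits in the imaginary quadratic field K = Q(√-163), then p > 40. Equivalently, if there exist integers a, b with b ≠ 0 such that a² + 163·b² = 4p for a prime p, then p ≥ 41. -/
import Mathlib


/-- If an odd prime `p` splits in `K = ℚ(√-163)` (for `p ≠ 163`, this is equivalent to
`-163` being a square mod `p`), then `p > 40`. Equivalently, if there exist integers
`a, b` with `b ≠ 0` such that `a² + 163 b² = 4 p` for a prime `p`, then `p ≥ 41`. -/
theorem stmt0 :
    (∀ p : ℕ, p.Prime → Odd p → p ≠ 163 → IsSquare (-163 : ZMod p) → 40 < p) ∧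
    (∀ p : ℕ, p.Prime → ∀ a b : ℤ, b ≠ 0 → a ^ 2 + 163 * b ^ 2 = 4 * (p : ℤ) → 41 ≤ p) := by
  constructor
  · intro p hp hodd hne hsq
    by_contra h
    push_neg at h
    interval_cases p <;> revert hsq <;> revert hodd <;>
      first | decide | norm_num at hp
  · intro p hp a b hb heq
    have hb2 : (1 : ℤ) ≤ b ^ 2 := by
      have : 0 < b ^ 2 := by positivity
      omega
    have ha : (0 : ℤ) ≤ a ^ 2 := sq_nonneg a
    have h4 : (163 : ℤ) ≤ 4 * (p : ℤ) := by nlinarith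
    have : (163 : ℤ) ≤ 4 * (p : ℤ) := h4
    exact_mod_cast by omega
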